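/- arXiv:2001.07133 — 3 statements merged into one kernel-verified Lean document; each statement's English description precedes it below -/
import Mathlib

section
/- Fix n ∈ ℕ, a step function F from machine states to machine states, and an F-run C. If γ ≤ α are ordinals with C(γ) = C(α), then C(γ + μ) = C(α + μ) for every ordinal μ. -/
noncomputable section

/-- `l ∈ ℝ` is a finite limit point of the `a`-sequence `f`. -/
def IsFiniteLimitPoint (a : Ordinal) (f : Ordinal → ℝ) (l : ℝ) : Prop :=
  ∀ β < a, ∀ ε : ℝ, 0 < ε → ∃ γ, β < γ ∧ γ < a ∧ |f γ - l| < ε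

/-- `+∞` is an infinite limit point of the `a`-sequence `f`. -/
def IsInfLimitPointTop (a : Ordinal) (f : Ordinal → ℝ) : Prop :=
  ∀ x : ℝ, ∀ β < a, ∃ γ, β < γ ∧ γ < a ∧ x < f γ

/-- `-∞` is an infinite limit point of the `a`-sequence `f`. -/
def IsInfLimitPointBot (a : Ordinal) (f : Ordinal → ℝ) : Prop :=
  ∀ x : ℝ, ∀ β < a, ∃ γ, β < γ ∧ γ < a ∧ f γ < x

/-- `+∞` is an infinite strong limit point of the `a`-sequence `f`. -/
def IsInfStrongLimitPointTop (a : Ordinal) (f : Ordinal → ℝ) : Prop :=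
  ∀ x : ℝ, ∃ β < a, ∀ γ, β < γ → γ < a → x < f γ

/-- `-∞` is an infinite strong limit point of the `a`-sequence `f`. -/
def IsInfStrongLimitPointBot (a : Ordinal) (f : Ordinal → ℝ) : Prop :=
  ∀ x : ℝ, ∃ β < a, ∀ γ, β < γ → γ < a → f γ < x

/-- The set of finite and infinite limit points of `f`, as a subset of the extended reals. -/
def LimP (a : Ordinal) (f : Ordinal → ℝ) : Set EReal :=
  {x | (∃ l : ℝ, x = (l : EReal) ∧ IsFiniteLimitPoint a f l) ∨
       (x = ⊤ ∧ IsInfLimitPointTop a f) ∨ (x = ⊥ ∧ IsInfLimitPointBot a f)}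

/-- The set of finite limit points and infinite strong limit points of `f`,
as a subset of the extended reals. -/
def SLimP (a : Ordinal) (f : Ordinal → ℝ) : Set EReal :=
  {x | (∃ l : ℝ, x = (l : EReal) ∧ IsFiniteLimitPoint a f l) ∨
       (x = ⊤ ∧ IsInfStrongLimitPointTop a f) ∨ (x = ⊥ ∧ IsInfStrongLimitPointBot a f)}

/-- The filter of final segments of `{α : α < l}`, generated by the sets
`{α : β ≤ α < l}` for `β < l`. -/
def segFilter (l : Ordinal) : Filter Ordinal :=
  ⨅ β ∈ Set.Iio l, Filter.principal (Set.Ico β l)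

/-- A machine state: `n` real registers together with a program counter. -/
structure MachineState (n : ℕ) where
  R : Fin n → ℝ
  I : ℕ

/-- Componentwise order on machine states. -/
def StateLE {n : ℕ} (s t : MachineState n) : Prop :=
  s.I ≤ t.I ∧ ∀ i : Fin n, s.R i ≤ t.R i

/-- `C` is an `F`-run: successor states are computed by the step function `F`, and at
limit times the counter is the liminf of the previous counters, while each register
contains the minimum of `SLimP` of the sequence of its previous contents. -/
def IsRun (n : ℕ) (F : MachineState n → MachineState n) (C : Ordinal → MachineState n) : Prop :=
  (∀ α : Ordinal, C (α + 1) = F (C α)) ∧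
  ∀ l : Ordinal, Order.IsSuccLimit l →
    (C l).I = Filter.liminf (fun α => (C α).I) (segFilter l) ∧
    ∀ i : Fin n, IsLeast (SLimP l (fun β => (C β).R i)) (((C l).R i : ℝ) : EReal)


theorem mem_segFilter {l : Ordinal} (hl : l ≠ 0) {s : Set Ordinal} :
    s ∈ segFilter l ↔ ∃ β < l, Set.Ico β l ⊆ s := by
  rw [segFilter, Filter.mem_biInf_of_directed]
  · simp
  · rintro x (hx : x < l) y (hy : y < l)
    refine ⟨max x y, Set.mem_Iio.2 (max_lt hx hy), ?_, ?_⟩ <;>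
      simp [Filter.principal_mono, Set.Ico_subset_Ico_left, le_max_left, le_max_right]
  · exact ⟨0, pos_iff_ne_zero.2 hl⟩

theorem segFilter_add {γ μ : Ordinal} (hμ : μ ≠ 0) :
    segFilter (γ + μ) = Filter.map (γ + ·) (segFilter μ) := by
  have hμ' : (0 : Ordinal) < μ := pos_iff_ne_zero.2 hμ
  have hgm : γ + μ ≠ 0 := by
    intro h
    exact hμ (le_antisymm (by calc μ ≤ γ + μ := le_add_self
                                 _ = 0 := h) (zero_le (a := μ)))
  ext s
  rw [Filter.mem_map, mem_segFilter hgm, mem_segFilter hμ]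
  constructor
  · rintro ⟨β, hβ, hsub⟩
    refine ⟨β - γ, Ordinal.sub_lt_of_lt_add hβ hμ', fun x hx => ?_⟩
    obtain ⟨hx1, hx2⟩ := hx
    refine hsub ⟨?_, ?_⟩
    · exact (Ordinal.le_add_sub β γ).trans (add_le_add_right hx1 γ)
    · exact add_lt_add_right hx2 γ
  · rintro ⟨β, hβ, hsub⟩
    refine ⟨γ + β, add_lt_add_right hβ γ, fun x hx => ?_⟩
    obtain ⟨hx1, hx2⟩ := hx
    have hγx : γ ≤ x := (le_self_add : γ ≤ γ + β).trans hx1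
    have hxe : γ + (x - γ) = x := Ordinal.add_sub_cancel_of_le hγx
    have h1 : β ≤ x - γ := by
      rw [← add_le_add_iff_left γ, hxe]; exact hx1
    have h2 : x - γ < μ := by
      rw [← add_lt_add_iff_left γ, hxe]; exact hx2
    have := hsub ⟨h1, h2⟩
    simpa [hxe] using this

theorem isFiniteLimitPoint_add {γ μ : Ordinal} (hμ : μ ≠ 0) (f : Ordinal → ℝ) (l : ℝ) :
    IsFiniteLimitPoint (γ + μ) f l ↔ IsFiniteLimitPoint μ (fun β => f (γ + β)) l := by
  have hμ' : (0 : Ordinal) < μ := pos_iff_ne_zero.2 hμ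
  constructor
  · intro h β hβ ε hε
    obtain ⟨δ, h1, h2, h3⟩ := h (γ + β) (add_lt_add_right hβ γ) ε hε
    have hγδ : γ ≤ δ := ((le_self_add : γ ≤ γ + β).trans h1.le)
    have hδe : γ + (δ - γ) = δ := Ordinal.add_sub_cancel_of_le hγδ
    refine ⟨δ - γ, ?_, ?_, ?_⟩
    · rw [← add_lt_add_iff_left γ, hδe]; exact h1
    · rw [← add_lt_add_iff_left γ, hδe]; exact h2
    · simpa [hδe] using h3
  · intro h β hβ ε hε
    obtain ⟨δ, h1, h2, h3⟩ := h (β - γ) (Ordinal.sub_lt_of_lt_add hβ hμ') ε hε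
    refine ⟨γ + δ, ?_, add_lt_add_right h2 γ, h3⟩
    exact lt_of_le_of_lt (Ordinal.le_add_sub β γ) (add_lt_add_right h1 γ)

theorem isInfStrongTop_add {γ μ : Ordinal} (hμ : μ ≠ 0) (f : Ordinal → ℝ) :
    IsInfStrongLimitPointTop (γ + μ) f ↔ IsInfStrongLimitPointTop μ (fun β => f (γ + β)) := by
  have hμ' : (0 : Ordinal) < μ := pos_iff_ne_zero.2 hμ
  constructor
  · intro h x
    obtain ⟨β, hβ, hb⟩ := h x
    refine ⟨β - γ, Ordinal.sub_lt_of_lt_add hβ hμ', fun δ h1 h2 => ?_⟩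
    refine hb (γ + δ) ?_ (add_lt_add_right h2 γ)
    exact lt_of_le_of_lt (Ordinal.le_add_sub β γ) (add_lt_add_right h1 γ)
  · intro h x
    obtain ⟨β, hβ, hb⟩ := h x
    refine ⟨γ + β, add_lt_add_right hβ γ, fun δ h1 h2 => ?_⟩
    have hγδ : γ ≤ δ := ((le_self_add : γ ≤ γ + β).trans h1.le)
    have hδe : γ + (δ - γ) = δ := Ordinal.add_sub_cancel_of_le hγδ
    have := hb (δ - γ) (by rw [← add_lt_add_iff_left γ, hδe]; exact h1)
      (by rw [← add_lt_add_iff_left γ, hδe]; exact h2)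
    simpa [hδe] using this

theorem isInfStrongBot_add {γ μ : Ordinal} (hμ : μ ≠ 0) (f : Ordinal → ℝ) :
    IsInfStrongLimitPointBot (γ + μ) f ↔ IsInfStrongLimitPointBot μ (fun β => f (γ + β)) := by
  have hμ' : (0 : Ordinal) < μ := pos_iff_ne_zero.2 hμ
  constructor
  · intro h x
    obtain ⟨β, hβ, hb⟩ := h x
    refine ⟨β - γ, Ordinal.sub_lt_of_lt_add hβ hμ', fun δ h1 h2 => ?_⟩
    refine hb (γ + δ) ?_ (add_lt_add_right h2 γ)
    exact lt_of_le_of_lt (Ordinal.le_add_sub β γ) (add_lt_add_right h1 γ)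
  · intro h x
    obtain ⟨β, hβ, hb⟩ := h x
    refine ⟨γ + β, add_lt_add_right hβ γ, fun δ h1 h2 => ?_⟩
    have hγδ : γ ≤ δ := ((le_self_add : γ ≤ γ + β).trans h1.le)
    have hδe : γ + (δ - γ) = δ := Ordinal.add_sub_cancel_of_le hγδ
    have := hb (δ - γ) (by rw [← add_lt_add_iff_left γ, hδe]; exact h1)
      (by rw [← add_lt_add_iff_left γ, hδe]; exact h2)
    simpa [hδe] using this

theorem SLimP_add {γ μ : Ordinal} (hμ : μ ≠ 0) (f : Ordinal → ℝ) :
    SLimP (γ + μ) f = SLimP μ (fun β => f (γ + β)) := by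
  ext x
  simp only [SLimP, Set.mem_setOf_eq, isFiniteLimitPoint_add hμ,
    isInfStrongTop_add hμ, isInfStrongBot_add hμ]

theorem SLimP_congr {a : Ordinal} {f g : Ordinal → ℝ} (h : ∀ β < a, f β = g β) :
    SLimP a f = SLimP a g := by
  have h1 : ∀ l : ℝ, IsFiniteLimitPoint a f l ↔ IsFiniteLimitPoint a g l := by
    intro l
    constructor
    · intro hh β hβ ε hε
      obtain ⟨δ, d1, d2, d3⟩ := hh β hβ ε hε
      exact ⟨δ, d1, d2, (h δ d2) ▸ d3⟩
    · intro hh β hβ ε hε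
      obtain ⟨δ, d1, d2, d3⟩ := hh β hβ ε hε
      exact ⟨δ, d1, d2, (h δ d2).symm ▸ d3⟩
  have h2 : IsInfStrongLimitPointTop a f ↔ IsInfStrongLimitPointTop a g := by
    constructor
    · intro hh x
      obtain ⟨β, hβ, hb⟩ := hh x
      exact ⟨β, hβ, fun δ d1 d2 => (h δ d2) ▸ hb δ d1 d2⟩
    · intro hh x
      obtain ⟨β, hβ, hb⟩ := hh x
      exact ⟨β, hβ, fun δ d1 d2 => (h δ d2).symm ▸ hb δ d1 d2⟩
  have h3 : IsInfStrongLimitPointBot a f ↔ IsInfStrongLimitPointBot a g := by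
    constructor
    · intro hh x
      obtain ⟨β, hβ, hb⟩ := hh x
      exact ⟨β, hβ, fun δ d1 d2 => (h δ d2) ▸ hb δ d1 d2⟩
    · intro hh x
      obtain ⟨β, hβ, hb⟩ := hh x
      exact ⟨β, hβ, fun δ d1 d2 => (h δ d2).symm ▸ hb δ d1 d2⟩
  ext x
  simp only [SLimP, Set.mem_setOf_eq, h2, h3]
  constructor <;> rintro (⟨l, rfl, hl⟩ | hs) <;>
    first
      | exact Or.inl ⟨l, rfl, (h1 l).mp hl⟩
      | exact Or.inl ⟨l, rfl, (h1 l).mpr hl⟩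
      | exact Or.inr hs

theorem Iio_mem_segFilter {l : Ordinal} (hl : l ≠ 0) : Set.Iio l ∈ segFilter l := by
  rw [mem_segFilter hl]
  exact ⟨0, pos_iff_ne_zero.2 hl, by simp [Set.Ico_subset_Iio_self]⟩

/-- A run is determined by its current state: if `C γ = C α` then
`C (γ + μ) = C (α + μ)` for every `μ`. -/
theorem stmt_7 (n : ℕ) (F : MachineState n → MachineState n) (C : Ordinal → MachineState n)
    (hC : IsRun n F C) (γ α : Ordinal) (hle : γ ≤ α) (heq : C γ = C α) :
    ∀ μ : Ordinal, C (γ + μ) = C (α + μ) := by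
  intro μ
  induction μ using Ordinal.limitRecOn with
  | zero => simpa using heq
  | add_one o ih =>
      rw [← add_assoc, ← add_assoc, hC.1, hC.1, ih]
  | limit o ho ih =>
      have hne : o ≠ 0 := ho.pos.ne'
      have hgl : Order.IsSuccLimit (γ + o) := Ordinal.isSuccLimit_add γ ho
      have hal : Order.IsSuccLimit (α + o) := Ordinal.isSuccLimit_add α ho
      obtain ⟨hI1, hR1⟩ := hC.2 _ hgl
      obtain ⟨hI2, hR2⟩ := hC.2 _ hal
      have key : ∀ β < o, C (γ + β) = C (α + β) := ih
      have hIeq : (C (γ + o)).I = (C (α + o)).I := by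
        rw [hI1, hI2, segFilter_add hne, segFilter_add hne,
          ← Filter.liminf_comp, ← Filter.liminf_comp]
        apply Filter.liminf_congr
        filter_upwards [Iio_mem_segFilter hne] with β hβ
        simp [Function.comp, key β hβ]
      have hReq : ∀ i : Fin n, (C (γ + o)).R i = (C (α + o)).R i := by
        intro i
        have e1 : SLimP (γ + o) (fun β => (C β).R i)
            = SLimP (α + o) (fun β => (C β).R i) := by
          rw [SLimP_add hne, SLimP_add hne]
          exact SLimP_congr (fun β hβ => by rw [key β hβ])
        have := (hR1 i).unique (e1 ▸ hR2 i)
        exact_mod_cast this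
      have : (C (γ + o)).R = (C (α + o)).R := funext hReq
      cases h1 : C (γ + o); cases h2 : C (α + o)
      simp_all
end
end

section
/- Fix n ∈ ℕ, a step function F from machine states to machine states, and an F-run C. Let λ be a limit ordinal and γ < λ such that the set {α < λ : C(α) = C(γ)} is cofinal in λ and such that C(γ) ≤ C(α) componentwise for every α with γ ≤ α < λ. Then C(λ) = C(γ). -/
noncomputable section

/-- If the snapshot `C γ` occurs cofinally often below the limit ordinal `l` and
componentwise minorizes all snapshots from time `γ` up to `l`, then `C l = C γ`. -/
theorem stmt_8 (n : ℕ) (F : MachineState n → MachineState n) (C : Ordinal → MachineState n)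
    (hC : IsRun n F C) (l : Ordinal) (hl : Order.IsSuccLimit l) (γ : Ordinal) (hγ : γ < l)
    (hcof : ∀ β < l, ∃ α, β < α ∧ α < l ∧ C α = C γ)
    (hle : ∀ α, γ ≤ α → α < l → StateLE (C γ) (C α)) :
    C l = C γ := by
  obtain ⟨hIl, hRl⟩ := hC.2 l hl
  -- membership in segFilter
  have hmem : ∀ s : Set Ordinal, s ∈ segFilter l ↔ ∃ β < l, Set.Ico β l ⊆ s := by
    intro s
    rw [segFilter, Filter.mem_biInf_of_directed]
    · simp [Filter.mem_principal]
    · rintro β₁ hβ₁ β₂ hβ₂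
      exact ⟨max β₁ β₂, Set.mem_Iio.mpr (max_lt (Set.mem_Iio.mp hβ₁) (Set.mem_Iio.mp hβ₂)), by
        simp only [Order.Preimage, ge_iff_le, Filter.le_principal_iff, Filter.mem_principal]
        constructor <;> exact Set.Ico_subset_Ico (by simp) le_rfl⟩
    · exact ⟨0, Set.mem_Iio.mpr ((zero_le (a := γ)).trans_lt hγ)⟩
  -- counter
  have hI : (C l).I = (C γ).I := by
    rw [hIl, Filter.liminf_eq]
    apply le_antisymm
    · apply csSup_le
      · refine ⟨0, ?_⟩
        rw [Set.mem_setOf_eq, Filter.eventually_iff, hmem]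
        exact ⟨γ, hγ, fun α _ => Nat.zero_le _⟩
      · rintro a ha
        rw [Set.mem_setOf_eq, Filter.eventually_iff, hmem] at ha
        obtain ⟨β, hβ, hsub⟩ := ha
        obtain ⟨α, hβα, hαl, hCα⟩ := hcof β hβ
        have := hsub ⟨le_of_lt hβα, hαl⟩
        simpa [hCα] using this
    · apply le_csSup
      · refine ⟨(C γ).I, ?_⟩
        rintro a ha
        rw [Set.mem_setOf_eq, Filter.eventually_iff, hmem] at ha
        obtain ⟨β, hβ, hsub⟩ := ha
        obtain ⟨α, hβα, hαl, hCα⟩ := hcof β hβ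
        have := hsub ⟨le_of_lt hβα, hαl⟩
        simpa [hCα] using this
      · rw [Set.mem_setOf_eq, Filter.eventually_iff, hmem]
        refine ⟨γ, hγ, fun α hα => (hle α hα.1 hα.2).1⟩
  -- registers
  have hR : (C l).R = (C γ).R := by
    funext i
    have hLeast := hRl i
    set f : Ordinal → ℝ := fun β => (C β).R i with hf
    have hmemS : ((((C γ).R i : ℝ)) : EReal) ∈ SLimP l f := by
      left
      refine ⟨(C γ).R i, rfl, ?_⟩
      intro β hβ ε hε
      obtain ⟨α, hβα, hαl, hCα⟩ := hcof (max β γ) (max_lt hβ hγ)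
      refine ⟨α, lt_of_le_of_lt (le_max_left _ _) hβα, hαl, ?_⟩
      simp [hf, hCα, hε]
    have h1 : (C l).R i ≤ (C γ).R i := by
      have := hLeast.2 hmemS
      exact_mod_cast this
    have h2 : (C γ).R i ≤ (C l).R i := by
      rcases hLeast.1 with ⟨l', hl', hfin⟩ | ⟨h, _⟩ | ⟨h, _⟩
      · have hl'' : l' = (C l).R i := by exact_mod_cast hl'.symm
        subst hl''
        by_contra hlt
        push_neg at hlt
        obtain ⟨α, hγα, hαl, habs⟩ := hfin γ hγ ((C γ).R i - (C l).R i) (by linarith)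
        have hge : (C γ).R i ≤ f α := (hle α (le_of_lt hγα) hαl).2 i
        have := abs_lt.mp habs
        simp only [hf] at hge
        linarith [this.2]
      · exact absurd h (by simp)
      · exact absurd h (by simp)
    exact le_antisymm h1 h2
  calc C l = ⟨(C l).R, (C l).I⟩ := rfl
    _ = ⟨(C γ).R, (C γ).I⟩ := by rw [hI, hR]
    _ = C γ := rfl
end
end

section
/- (Strong Loop Lemma.) Fix n ∈ ℕ, a step function F from machine states to machine states, and an F-run C. Suppose there are ordinals γ < β such that C(γ) = C(β) and C(β) ≤ C(α) componentwise for every α with γ ≤ α ≤ β. Let δ be the unique ordinal with γ + δ = β. Then C(γ + δ·ν) = C(γ) for every ordinal ν; in particular, for every ordinal η there is an ordinal θ > η with C(θ) = C(γ), i.e. the run is in a strong loop and repeats the snapshot C(γ) at arbitrarily large ordinal times. -/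
noncomputable section

open Ordinal Filter Set

lemma segFilter_eventually {a : Ordinal} (ha : a ≠ 0) (P : Ordinal → Prop) :
    (∀ᶠ α in segFilter a, P α) ↔ ∃ β < a, ∀ α, β ≤ α → α < a → P α := by
  have hdir : DirectedOn ((fun β => Filter.principal (Set.Ico β a)) ⁻¹'o fun x1 x2 => x1 ≥ x2)
      (Set.Iio a) := by
    intro β₁ h₁ β₂ h₂
    refine ⟨max β₁ β₂, Set.mem_Iio.2 (max_lt (Set.mem_Iio.1 h₁) (Set.mem_Iio.1 h₂)), ?_, ?_⟩
    · exact Filter.principal_mono.2 (Set.Ico_subset_Ico_left (le_max_left _ _))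
    · exact Filter.principal_mono.2 (Set.Ico_subset_Ico_left (le_max_right _ _))
  have hne : (Set.Iio a).Nonempty := ⟨0, pos_iff_ne_zero.2 ha⟩
  rw [Filter.Eventually, segFilter, Filter.mem_biInf_of_directed hdir hne]
  simp only [Filter.mem_principal]
  constructor
  · rintro ⟨β, hβ, h⟩
    exact ⟨β, hβ, fun α h1 h2 => h ⟨h1, h2⟩⟩
  · rintro ⟨β, hβ, h⟩
    exact ⟨β, hβ, fun α hα => h α hα.1 hα.2⟩

lemma exists_decomp {b ρ α : Ordinal} (hb : b ≤ α) (hα : α < b + ρ) : ∃ s < ρ, α = b + s := by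
  refine ⟨α - b, ?_, (Ordinal.add_sub_cancel_of_le hb).symm⟩
  have h := Ordinal.add_sub_cancel_of_le hb
  rw [← h] at hα
  exact lt_of_add_lt_add_left hα

lemma exists_ge {b ρ β : Ordinal} (hρ0 : 0 < ρ) (hβ : β < b + ρ) : ∃ s < ρ, β ≤ b + s := by
  rcases le_or_gt β b with h | h
  · exact ⟨0, hρ0, by simpa using h⟩
  · obtain ⟨s, hs, rfl⟩ := exists_decomp h.le hβ
    exact ⟨s, hs, le_rfl⟩

lemma ev_shift {X : Type*} (C : Ordinal → X) (b c ρ : Ordinal) (hρ : 0 < ρ)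
    (hmatch : ∀ s < ρ, C (b + s) = C (c + s)) (P : X → Prop)
    (h : ∃ β < b + ρ, ∀ α, β ≤ α → α < b + ρ → P (C α)) :
    ∃ β < c + ρ, ∀ α, β ≤ α → α < c + ρ → P (C α) := by
  obtain ⟨β, hβ, h⟩ := h
  obtain ⟨s₀, hs₀, hb₀⟩ := exists_ge hρ hβ
  refine ⟨c + s₀, add_lt_add_right hs₀ c, ?_⟩
  intro α hge hlt
  have hc : c ≤ α := le_trans (le_self_add (a := c) (b := s₀)) hge
  obtain ⟨s, hs, rfl⟩ := exists_decomp hc hlt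
  have hs₀s : s₀ ≤ s := le_of_add_le_add_left hge
  rw [← hmatch s hs]
  exact h (b + s) (le_trans hb₀ (add_le_add_right hs₀s b)) (add_lt_add_right hs b)

lemma freq_shift {X : Type*} (C : Ordinal → X) (b c ρ : Ordinal) (hρ : 0 < ρ)
    (hmatch : ∀ s < ρ, C (b + s) = C (c + s)) (P : X → Prop)
    (h : ∀ β < b + ρ, ∃ α, β ≤ α ∧ α < b + ρ ∧ P (C α)) :
    ∀ β < c + ρ, ∃ α, β ≤ α ∧ α < c + ρ ∧ P (C α) := by
  intro β hβ
  obtain ⟨s₀, hs₀, hb₀⟩ := exists_ge hρ hβ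
  obtain ⟨α, h1, h2, h3⟩ := h (b + s₀) (add_lt_add_right hs₀ b)
  have hba : b ≤ α := le_trans (le_self_add (a := b) (b := s₀)) h1
  obtain ⟨s, hs, rfl⟩ := exists_decomp hba h2
  have hs₀s : s₀ ≤ s := le_of_add_le_add_left h1
  refine ⟨c + s, le_trans hb₀ (add_le_add_right hs₀s c), add_lt_add_right hs c, ?_⟩
  rw [← hmatch s hs]; exact h3

lemma flp_iff {a : Ordinal} (ha : Order.IsSuccLimit a) (f : Ordinal → ℝ) (l : ℝ) :
    IsFiniteLimitPoint a f l ↔ ∀ ε : ℝ, 0 < ε → ∀ β < a, ∃ γ, β ≤ γ ∧ γ < a ∧ |f γ - l| < ε := by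
  constructor
  · intro h ε hε β hβ
    obtain ⟨γ, h1, h2, h3⟩ := h β hβ ε hε
    exact ⟨γ, h1.le, h2, h3⟩
  · intro h β hβ ε hε
    obtain ⟨γ, h1, h2, h3⟩ := h ε hε (β + 1)
      (by rw [Ordinal.add_one_eq_succ]; exact ha.succ_lt hβ)
    refine ⟨γ, lt_of_lt_of_le ?_ h1, h2, h3⟩
    rw [Ordinal.add_one_eq_succ]; exact Order.lt_succ β

lemma top_iff {a : Ordinal} (ha : Order.IsSuccLimit a) (f : Ordinal → ℝ) :
    IsInfStrongLimitPointTop a f ↔ ∀ x : ℝ, ∃ β < a, ∀ γ, β ≤ γ → γ < a → x < f γ := by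
  constructor
  · intro h x
    obtain ⟨β, hβ, h⟩ := h x
    refine ⟨β + 1, by rw [Ordinal.add_one_eq_succ]; exact ha.succ_lt hβ, ?_⟩
    intro γ h1 h2
    refine h γ (lt_of_lt_of_le ?_ h1) h2
    rw [Ordinal.add_one_eq_succ]; exact Order.lt_succ β
  · intro h x
    obtain ⟨β, hβ, h⟩ := h x
    exact ⟨β, hβ, fun γ h1 h2 => h γ h1.le h2⟩

lemma bot_iff {a : Ordinal} (ha : Order.IsSuccLimit a) (f : Ordinal → ℝ) :
    IsInfStrongLimitPointBot a f ↔ ∀ x : ℝ, ∃ β < a, ∀ γ, β ≤ γ → γ < a → f γ < x := by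
  constructor
  · intro h x
    obtain ⟨β, hβ, h⟩ := h x
    refine ⟨β + 1, by rw [Ordinal.add_one_eq_succ]; exact ha.succ_lt hβ, ?_⟩
    intro γ h1 h2
    refine h γ (lt_of_lt_of_le ?_ h1) h2
    rw [Ordinal.add_one_eq_succ]; exact Order.lt_succ β
  · intro h x
    obtain ⟨β, hβ, h⟩ := h x
    exact ⟨β, hβ, fun γ h1 h2 => h γ h1.le h2⟩

lemma slimp_subset {X : Type*} (C : Ordinal → X) (f : X → ℝ) (b c ρ : Ordinal) (hρ : Order.IsSuccLimit ρ)
    (hmatch : ∀ s < ρ, C (b + s) = C (c + s)) :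
    SLimP (b + ρ) (fun α => f (C α)) ⊆ SLimP (c + ρ) (fun α => f (C α)) := by
  have hbl : Order.IsSuccLimit (b + ρ) := Ordinal.isSuccLimit_add b hρ
  have hcl : Order.IsSuccLimit (c + ρ) := Ordinal.isSuccLimit_add c hρ
  rintro x (⟨l, rfl, hl⟩ | ⟨rfl, htop⟩ | ⟨rfl, hbot⟩)
  · left
    refine ⟨l, rfl, ?_⟩
    rw [flp_iff hcl]
    rw [flp_iff hbl] at hl
    intro ε hε
    exact freq_shift C b c ρ hρ.pos hmatch (fun st => |f st - l| < ε) (hl ε hε)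
  · right; left
    refine ⟨rfl, ?_⟩
    rw [top_iff hcl]
    rw [top_iff hbl] at htop
    intro x
    exact ev_shift C b c ρ hρ.pos hmatch (fun st => x < f st) (htop x)
  · right; right
    refine ⟨rfl, ?_⟩
    rw [bot_iff hcl]
    rw [bot_iff hbl] at hbot
    intro x
    exact ev_shift C b c ρ hρ.pos hmatch (fun st => f st < x) (hbot x)

lemma state_ext {n : ℕ} {s t : MachineState n} (hI : s.I = t.I) (hR : ∀ i, s.R i = t.R i) :
    s = t := by
  cases s; cases t
  simp only [MachineState.mk.injEq]
  exact ⟨funext hR, hI⟩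

lemma run_limit_transfer {n : ℕ} {F : MachineState n → MachineState n}
    {C : Ordinal → MachineState n} (hC : IsRun n F C) (b c ρ : Ordinal) (hρ : Order.IsSuccLimit ρ)
    (hmatch : ∀ s < ρ, C (b + s) = C (c + s)) : C (b + ρ) = C (c + ρ) := by
  have hmatch' : ∀ s < ρ, C (c + s) = C (b + s) := fun s hs => (hmatch s hs).symm
  have hbl : Order.IsSuccLimit (b + ρ) := Ordinal.isSuccLimit_add b hρ
  have hcl : Order.IsSuccLimit (c + ρ) := Ordinal.isSuccLimit_add c hρ
  obtain ⟨hI1, hR1⟩ := hC.2 _ hbl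
  obtain ⟨hI2, hR2⟩ := hC.2 _ hcl
  refine state_ext ?_ ?_
  · rw [hI1, hI2, Filter.liminf_eq, Filter.liminf_eq]
    congr 1
    ext m
    rw [Set.mem_setOf_eq, Set.mem_setOf_eq, segFilter_eventually hbl.pos.ne',
      segFilter_eventually hcl.pos.ne']
    constructor
    · exact ev_shift C b c ρ hρ.pos hmatch (fun st => m ≤ st.I)
    · exact ev_shift C c b ρ hρ.pos hmatch' (fun st => m ≤ st.I)
  · intro i
    have hS : SLimP (b + ρ) (fun β => (C β).R i) = SLimP (c + ρ) (fun β => (C β).R i) :=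
      le_antisymm (slimp_subset C (fun st => st.R i) b c ρ hρ hmatch)
        (slimp_subset C (fun st => st.R i) c b ρ hρ hmatch')
    have h2 := hR2 i
    rw [← hS] at h2
    exact_mod_cast (hR1 i).unique h2

lemma liminf_eq_const {a : Ordinal} (ha : Order.IsSuccLimit a) (f : Ordinal → ℕ) (m : ℕ)
    (hfreq : ∀ β < a, ∃ θ, β ≤ θ ∧ θ < a ∧ f θ = m)
    (hbound : ∃ β₀ < a, ∀ θ, β₀ ≤ θ → θ < a → m ≤ f θ) :
    Filter.liminf f (segFilter a) = m := by
  rw [Filter.liminf_eq]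
  have hset : {k | ∀ᶠ α in segFilter a, k ≤ f α} = Set.Iic m := by
    ext k
    rw [Set.mem_setOf_eq, segFilter_eventually ha.pos.ne']
    constructor
    · rintro ⟨β, hβ, h⟩
      obtain ⟨θ, h1, h2, h3⟩ := hfreq β hβ
      exact h3 ▸ h θ h1 h2
    · intro hk
      obtain ⟨β₀, hβ₀, h⟩ := hbound
      exact ⟨β₀, hβ₀, fun θ h1 h2 => le_trans hk (h θ h1 h2)⟩
  rw [hset, csSup_Iic]

lemma isLeast_SLimP_const {a : Ordinal} (ha : Order.IsSuccLimit a) (f : Ordinal → ℝ) (m : ℝ)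
    (hfreq : ∀ β < a, ∃ θ, β ≤ θ ∧ θ < a ∧ f θ = m)
    (hbound : ∃ β₀ < a, ∀ θ, β₀ ≤ θ → θ < a → m ≤ f θ) :
    IsLeast (SLimP a f) ((m : ℝ) : EReal) := by
  constructor
  · left
    refine ⟨m, rfl, ?_⟩
    rw [flp_iff ha]
    intro ε hε β hβ
    obtain ⟨θ, h1, h2, h3⟩ := hfreq β hβ
    exact ⟨θ, h1, h2, by rw [h3]; simpa using hε⟩
  · rintro x (⟨l, rfl, hl⟩ | ⟨rfl, _⟩ | ⟨rfl, hbot⟩)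
    · rw [EReal.coe_le_coe_iff]
      by_contra hlt
      push_neg at hlt
      obtain ⟨β₀, hβ₀, hb⟩ := hbound
      obtain ⟨γ', h1, h2, h3⟩ := hl β₀ hβ₀ (m - l) (by linarith)
      have hge := hb γ' h1.le h2
      rw [abs_lt] at h3
      linarith
    · exact le_top
    · exfalso
      obtain ⟨β, hβ, h⟩ := hbot m
      obtain ⟨θ, h1, h2, h3⟩ := hfreq (β + 1)
        (by rw [Ordinal.add_one_eq_succ]; exact ha.succ_lt hβ)
      have hβθ : β < θ := lt_of_lt_of_le
        (by rw [Ordinal.add_one_eq_succ]; exact Order.lt_succ β) h1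
      have := h θ hβθ h2
      rw [h3] at this
      exact lt_irrefl m this

lemma run_limit_eq_const {n : ℕ} {F : MachineState n → MachineState n}
    {C : Ordinal → MachineState n} (hC : IsRun n F C) {a : Ordinal} (ha : Order.IsSuccLimit a)
    (M : MachineState n)
    (hfreq : ∀ β < a, ∃ θ, β ≤ θ ∧ θ < a ∧ C θ = M)
    (hbound : ∃ β₀ < a, ∀ θ, β₀ ≤ θ → θ < a → StateLE M (C θ)) :
    C a = M := by
  obtain ⟨hI, hR⟩ := hC.2 a ha
  refine state_ext ?_ ?_
  · rw [hI]
    apply liminf_eq_const ha _ M.I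
    · intro β hβ
      obtain ⟨θ, h1, h2, h3⟩ := hfreq β hβ
      exact ⟨θ, h1, h2, by rw [h3]⟩
    · obtain ⟨β₀, hβ₀, h⟩ := hbound
      exact ⟨β₀, hβ₀, fun θ h1 h2 => (h θ h1 h2).1⟩
  · intro i
    have h2 : IsLeast (SLimP a fun β => (C β).R i) ((M.R i : ℝ) : EReal) := by
      apply isLeast_SLimP_const ha _ (M.R i)
      · intro β hβ
        obtain ⟨θ, h1, h2, h3⟩ := hfreq β hβ
        exact ⟨θ, h1, h2, by rw [h3]⟩
      · obtain ⟨β₀, hβ₀, h⟩ := hbound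
        exact ⟨β₀, hβ₀, fun θ h1 h2 => (h θ h1 h2).2 i⟩
    exact_mod_cast (hR i).unique h2

/-- Strong Loop Lemma: if `C γ = C β` with `γ < β` and `C β` componentwise minorizes all
snapshots in between, then the run repeats the snapshot `C γ` at every time `γ + δ·ν`
(where `γ + δ = β`), and in particular at arbitrarily large times. -/
theorem stmt_9 (n : ℕ) (F : MachineState n → MachineState n) (C : Ordinal → MachineState n)
    (hC : IsRun n F C) (γ β δ : Ordinal) (hγβ : γ < β) (heq : C γ = C β) (hδ : γ + δ = β)
    (hle : ∀ α, γ ≤ α → α ≤ β → StateLE (C β) (C α)) :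
    (∀ ν : Ordinal, C (γ + δ * ν) = C γ) ∧
    (∀ η : Ordinal, ∃ θ, η < θ ∧ C θ = C γ) := by
  have hδ0 : δ ≠ 0 := by
    rintro rfl
    rw [add_zero] at hδ
    exact absurd hδ (ne_of_lt hγβ)
  have hδpos : 0 < δ := pos_iff_ne_zero.2 hδ0
  have key : ∀ α : Ordinal, ∀ q r : Ordinal, r < δ → α = γ + (δ * q + r) → C α = C (γ + r) := by
    intro α
    induction α using Ordinal.induction with
    | _ α IH =>
    intro q r hr hα
    rcases Ordinal.zero_or_succ_or_isSuccLimit r with hr0 | ⟨r', hr'⟩ | hrlim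
    · subst hr0
      rcases Ordinal.zero_or_succ_or_isSuccLimit q with hq0 | ⟨q', hq'⟩ | hqlim
      · -- q = 0
        subst hq0
        rw [hα]
        simp
      · -- q = succ q'
        subst hq'
        have hαe : α = (γ + δ * q') + δ := by
          rw [hα, Ordinal.mul_succ, add_zero, add_assoc]
        rcases Ordinal.zero_or_succ_or_isSuccLimit δ with h0 | ⟨d, hd⟩ | hδlim
        · exact absurd h0 hδ0
        · -- δ = succ d
          have hdδ : d < δ := by rw [← hd]; exact Order.lt_succ d
          have hα' : α = (γ + (δ * q' + d)) + 1 := by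
            rw [hαe, ← hd, Ordinal.add_one_eq_succ, ← Ordinal.add_succ, ← Ordinal.add_succ,
              add_assoc]
          have hlt : γ + (δ * q' + d) < α := by
            rw [hα', Ordinal.add_one_eq_succ]; exact Order.lt_succ _
          have prev : C (γ + (δ * q' + d)) = C (γ + d) := IH _ hlt q' d hdδ rfl
          have hβd : β = (γ + d) + 1 := by
            rw [← hδ, ← hd, Ordinal.add_one_eq_succ, ← Ordinal.add_succ]
          rw [hα', hC.1, prev, ← hC.1, ← hβd, ← heq, add_zero]
        · -- δ limit
          have hmatch : ∀ s < δ, C ((γ + δ * q') + s) = C (γ + s) := by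
            intro s hs
            have hlt : (γ + δ * q') + s < α := by
              rw [hαe]; exact add_lt_add_right hs _
            exact IH _ hlt q' s hs (by rw [add_assoc])
          have := run_limit_transfer hC (γ + δ * q') γ δ hδlim hmatch
          rw [hαe, this, hδ, ← heq, add_zero]
      · -- q limit
        rw [add_zero] at hα
        rw [add_zero]
        have hmul : Order.IsSuccLimit (δ * q) := Ordinal.isSuccLimit_mul_right hδpos hqlim
        have halim : Order.IsSuccLimit α := hα ▸ Ordinal.isSuccLimit_add γ hmul
        have hγα : γ < α := by
          rw [hα]
          have : (0:Ordinal) < δ * q := hmul.pos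
          simpa using this
        -- C θ = C (γ + (θ - γ) % δ) for θ ∈ [γ, α)
        have hcanon : ∀ θ, γ ≤ θ → θ < α → C θ = C (γ + (θ - γ) % δ) ∧ (θ - γ) % δ < δ := by
          intro θ h1 h2
          have hmod : (θ - γ) % δ < δ := Ordinal.mod_lt _ hδ0
          have hdm : δ * ((θ - γ) / δ) + (θ - γ) % δ = θ - γ := Ordinal.div_add_mod _ _
          have hθ : θ = γ + (δ * ((θ - γ) / δ) + (θ - γ) % δ) := by
            rw [hdm, Ordinal.add_sub_cancel_of_le h1]
          exact ⟨IH θ h2 _ _ hmod hθ, hmod⟩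
        apply run_limit_eq_const hC halim
        · -- frequency: multiples of δ
          intro β' hβ'
          rcases le_or_gt β' γ with h | h
          · exact ⟨γ, h, hγα, rfl⟩
          · have hsub : β' - γ < δ * q := by
              have := Ordinal.add_sub_cancel_of_le h.le
              rw [← this, hα] at hβ'
              exact lt_of_add_lt_add_left hβ'
            obtain ⟨q'', hq''q, hq''⟩ := (Ordinal.lt_mul_iff_of_isSuccLimit hqlim).1 hsub
            have hθlt : γ + δ * q'' < α := by
              rw [hα]
              exact add_lt_add_right (mul_lt_mul_of_pos_left hq''q hδpos) γ
            have hθge : β' ≤ γ + δ * q'' := by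
              have : β' = γ + (β' - γ) := (Ordinal.add_sub_cancel_of_le h.le).symm
              rw [this]
              exact add_le_add_right hq''.le γ
            have hCθ : C (γ + δ * q'') = C γ := by
              have := IH _ hθlt q'' 0 hδpos (by rw [add_zero])
              rwa [add_zero] at this
            exact ⟨γ + δ * q'', hθge, hθlt, hCθ⟩
        · -- bound
          refine ⟨γ, hγα, ?_⟩
          intro θ h1 h2
          obtain ⟨hCθ, hmod⟩ := hcanon θ h1 h2
          rw [hCθ, heq]
          exact hle _ le_self_add
            (by rw [← hδ]; exact add_le_add_right hmod.le γ)
    · -- r = succ r'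
      subst hr'
      have hr'δ : r' < δ := lt_of_lt_of_le (Order.lt_succ r') hr.le
      have hα' : α = (γ + (δ * q + r')) + 1 := by
        rw [hα, Ordinal.add_one_eq_succ, ← Ordinal.add_succ, ← Ordinal.add_succ]
      have hlt : γ + (δ * q + r') < α := by
        rw [hα', Ordinal.add_one_eq_succ]; exact Order.lt_succ _
      have prev : C (γ + (δ * q + r')) = C (γ + r') := IH _ hlt q r' hr'δ rfl
      have hgr : γ + Order.succ r' = (γ + r') + 1 := by
        rw [Ordinal.add_succ, Ordinal.add_one_eq_succ]
      rw [hα', hC.1, prev, ← hC.1, ← hgr]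
    · -- r limit
      have hmatch : ∀ s < r, C ((γ + δ * q) + s) = C (γ + s) := by
        intro s hs
        have hsδ : s < δ := hs.trans hr
        have hlt : (γ + δ * q) + s < α := by
          rw [hα, ← add_assoc]
          exact add_lt_add_right hs _
        exact IH _ hlt q s hsδ (by rw [add_assoc])
      have := run_limit_transfer hC (γ + δ * q) γ r hrlim hmatch
      rw [hα, ← add_assoc]
      exact this
  constructor
  · intro ν
    have := key (γ + δ * ν) ν 0 hδpos (by rw [add_zero])
    rwa [add_zero] at this
  · intro η
    refine ⟨γ + δ * (η + 1), ?_, ?_⟩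
    · calc η < η + 1 := by
            rw [Ordinal.add_one_eq_succ]; exact Order.lt_succ η
        _ ≤ δ * (η + 1) := by
            conv_lhs => rw [← one_mul (η + 1)]
            exact mul_le_mul_left (Ordinal.one_le_iff_ne_zero.2 hδ0) _
        _ ≤ γ + δ * (η + 1) := le_add_self
    · have := key (γ + δ * (η + 1)) (η + 1) 0 hδpos (by rw [add_zero])
      rwa [add_zero] at this
end
end
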